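/- arXiv:2407.16012 — 4 statements merged into one kernel-verified Lean document; each statement's English description precedes it below -/
import Mathlib

section
/- Equivalence of the two definitions of quantum guesswork: for every finite type Y and every POVM E indexed by Y, the optimally ordered classical guesswork satisfies G(ρ,p;E) ≥ ⨅ over POVMs F indexed by S_n of Ĝ(ρ,p;F); moreover the infimum over POVMs F indexed by S_n of the optimally ordered classical guesswork G(ρ,p;F) equals the infimum over POVMs F indexed by S_n of Ĝ(ρ,p;F). -/
open Matrix BigOperators Finset ComplexOrder

noncomputable section

/-- A POVM indexed by a finite type `Y` in dimension `d`. -/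
def IsPOVM {d : ℕ} {Y : Type*} [Fintype Y] (E : Y → Matrix (Fin d) (Fin d) ℂ) : Prop :=
  (∀ y, (E y).PosSemidef) ∧ ∑ y, E y = 1

/-- Guesswork of the strategy (POVM) `E` indexed by permutations:
`Ĝ(ρ,p;E) = ∑_σ ∑_t t · p(σ(t)) · Re Tr(E_σ ρ_{σ(t)})`. -/
def Ghat {d n : ℕ} (ρ : Fin n → Matrix (Fin d) (Fin d) ℂ) (p : Fin n → ℝ)
    (E : Equiv.Perm (Fin n) → Matrix (Fin d) (Fin d) ℂ) : ℝ :=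
  ∑ σ : Equiv.Perm (Fin n), ∑ t : Fin n,
    ((t.val : ℝ) + 1) * p (σ t) * ((E σ * ρ (σ t)).trace.re)

/-- The quantum guesswork: infimum of `Ĝ` over all POVMs indexed by `S_n`. -/
def QGuesswork {d n : ℕ} (ρ : Fin n → Matrix (Fin d) (Fin d) ℂ) (p : Fin n → ℝ) : ℝ :=
  ⨅ E : {E : Equiv.Perm (Fin n) → Matrix (Fin d) (Fin d) ℂ // IsPOVM E}, Ghat ρ p E.1

/-- The optimally ordered classical guesswork of a POVM indexed by a finite type `Y`. -/
def Gopt {d n : ℕ} (ρ : Fin n → Matrix (Fin d) (Fin d) ℂ) (p : Fin n → ℝ)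
    {Y : Type*} [Fintype Y] (E : Y → Matrix (Fin d) (Fin d) ℂ) : ℝ :=
  ∑ y : Y, ⨅ τ : Equiv.Perm (Fin n),
    ∑ i : Fin n, (((τ i).val : ℝ) + 1) * p i * ((E y * ρ i).trace.re)

/-- `𝓔_σ = ∑_t (2t - n - 1) p(σ(t)) ρ_{σ(t)}`. -/
def calE {d n : ℕ} (ρ : Fin n → Matrix (Fin d) (Fin d) ℂ) (p : Fin n → ℝ)
    (σ : Equiv.Perm (Fin n)) : Matrix (Fin d) (Fin d) ℂ :=
  ∑ t : Fin n, ((2 * ((t.val : ℝ) + 1) - n - 1) * p (σ t)) • ρ (σ t)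

/-- Functional calculus `f(A)` of a real function on a Hermitian matrix
(junk value `0` if `A` is not Hermitian). -/
def herApply {d : ℕ} (f : ℝ → ℝ) (A : Matrix (Fin d) (Fin d) ℂ) :
    Matrix (Fin d) (Fin d) ℂ :=
  if hA : A.IsHermitian then
    (hA.eigenvectorUnitary : Matrix (Fin d) (Fin d) ℂ) *
      Matrix.diagonal (fun i => (f (hA.eigenvalues i) : ℂ)) *
      star (hA.eigenvectorUnitary : Matrix (Fin d) (Fin d) ℂ)
  else 0

/-- `|A|`, the absolute value of a Hermitian matrix. -/
def matAbs {d : ℕ} (A : Matrix (Fin d) (Fin d) ℂ) : Matrix (Fin d) (Fin d) ℂ :=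
  herApply (fun x => |x|) A

/-- Trace norm `‖A‖ = Re Tr |A|` of a Hermitian matrix. -/
def traceNorm {d : ℕ} (A : Matrix (Fin d) (Fin d) ℂ) : ℝ :=
  (matAbs A).trace.re

/-- The reversed permutation `σ̄(t) = σ(n+1-t)`. -/
def permBar {n : ℕ} (σ : Equiv.Perm (Fin n)) : Equiv.Perm (Fin n) :=
  σ * Fin.revPerm

/-- `g(λ) = 1` for `λ < 0`, `1/2` for `λ = 0`, `0` for `λ > 0`. -/
def gNeg : ℝ → ℝ := fun x => if x < 0 then 1 else if x = 0 then 1 / 2 else 0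

/-- Dall'Arno's POVM `E^{σ*}`. -/
def povmStar {d n : ℕ} (ρ : Fin n → Matrix (Fin d) (Fin d) ℂ) (p : Fin n → ℝ)
    (σs : Equiv.Perm (Fin n)) : Equiv.Perm (Fin n) → Matrix (Fin d) (Fin d) ℂ :=
  fun σ => if σ = σs ∨ σ = permBar σs then herApply gNeg (calE ρ p σ) else 0



/-- Shannon entropy in bits. -/
def shannonH {n : ℕ} (p : Fin n → ℝ) : ℝ := -∑ x, p x * Real.logb 2 (p x)

/-- Von Neumann entropy in bits (junk value `0` for non-Hermitian matrices). -/
def vonNeumann {d : ℕ} (A : Matrix (Fin d) (Fin d) ℂ) : ℝ :=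
  if hA : A.IsHermitian then -∑ i, hA.eigenvalues i * Real.logb 2 (hA.eigenvalues i) else 0

/-- Holevo information of the ensemble, in bits. -/
def holevoInfo {d n : ℕ} (ρ : Fin n → Matrix (Fin d) (Fin d) ℂ) (p : Fin n → ℝ) : ℝ :=
  vonNeumann (∑ x, p x • ρ x) - ∑ x, p x * vonNeumann (ρ x)


lemma psd_trace_re_nonneg {d : ℕ} {M : Matrix (Fin d) (Fin d) ℂ} (hM : M.PosSemidef) :
    0 ≤ M.trace.re := by
  have h : ∀ i, 0 ≤ (M i i).re := by
    intro i
    have := hM.dotProduct_mulVec_nonneg (Pi.single i 1)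
    have h2 : star (Pi.single i 1) ⬝ᵥ M *ᵥ (Pi.single i 1 : Fin d → ℂ) = M i i := by
      simp [dotProduct, Matrix.mulVec, Pi.single_apply]
    rw [h2] at this
    exact (Complex.le_def.mp this).1
  rw [Matrix.trace, Complex.re_sum]
  exact Finset.sum_nonneg fun i _ => h i

lemma trace_mul_re_nonneg {d : ℕ} {A B : Matrix (Fin d) (Fin d) ℂ}
    (hA : A.PosSemidef) (hB : B.PosSemidef) : 0 ≤ ((A * B).trace).re := by
  obtain ⟨C, rfl⟩ : ∃ C : Matrix (Fin d) (Fin d) ℂ, A = Cᴴ * C := by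
    open scoped MatrixOrder in
    obtain ⟨X, hX, -, hXX⟩ := CFC.exists_sqrt_of_isSelfAdjoint_of_quasispectrumRestricts
      hA.isHermitian.isSelfAdjoint (QuasispectrumRestricts.nnreal_of_nonneg hA.nonneg)
    exact ⟨X, by rw [← hXX, ← star_eq_conjTranspose, hX.star_eq]⟩
  rw [Matrix.mul_assoc, Matrix.trace_mul_comm]
  exact psd_trace_re_nonneg (by simpa [Matrix.mul_assoc] using hB.mul_mul_conjTranspose_same C)

/-- The classical guesswork of outcome-matrix `M` with ordering `τ`. -/
def gwf {d n : ℕ} (ρ : Fin n → Matrix (Fin d) (Fin d) ℂ) (p : Fin n → ℝ)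
    (M : Matrix (Fin d) (Fin d) ℂ) (τ : Equiv.Perm (Fin n)) : ℝ :=
  ∑ i : Fin n, (((τ i).val : ℝ) + 1) * p i * ((M * ρ i).trace.re)

lemma gwf_nonneg {d n : ℕ} {ρ : Fin n → Matrix (Fin d) (Fin d) ℂ} {p : Fin n → ℝ}
    {M : Matrix (Fin d) (Fin d) ℂ} (hρ : ∀ x, (ρ x).PosSemidef) (hp : ∀ x, 0 ≤ p x)
    (hM : M.PosSemidef) (τ : Equiv.Perm (Fin n)) : 0 ≤ gwf ρ p M τ := by
  refine Finset.sum_nonneg fun i _ => mul_nonneg (mul_nonneg (by positivity) (hp i)) ?_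
  exact trace_mul_re_nonneg hM (hρ i)

lemma gwf_sum {d n : ℕ} (ρ : Fin n → Matrix (Fin d) (Fin d) ℂ) (p : Fin n → ℝ)
    {Y : Type*} (s : Finset Y) (E : Y → Matrix (Fin d) (Fin d) ℂ) (τ : Equiv.Perm (Fin n)) :
    gwf ρ p (∑ y ∈ s, E y) τ = ∑ y ∈ s, gwf ρ p (E y) τ := by
  unfold gwf
  rw [Finset.sum_comm]
  refine Finset.sum_congr rfl fun i _ => ?_
  rw [Finset.sum_mul, Matrix.trace_sum, Complex.re_sum, Finset.mul_sum]

lemma iInf_gwf_bddBelow {d n : ℕ} (ρ : Fin n → Matrix (Fin d) (Fin d) ℂ) (p : Fin n → ℝ)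
    (M : Matrix (Fin d) (Fin d) ℂ) : BddBelow (Set.range (gwf ρ p M)) :=
  Finite.bddBelow_range _

/-- `Gopt` in terms of `gwf`. -/
lemma Gopt_eq {d n : ℕ} (ρ : Fin n → Matrix (Fin d) (Fin d) ℂ) (p : Fin n → ℝ)
    {Y : Type*} [Fintype Y] (E : Y → Matrix (Fin d) (Fin d) ℂ) :
    Gopt ρ p E = ∑ y : Y, ⨅ τ : Equiv.Perm (Fin n), gwf ρ p (E y) τ := rfl

/-- `Ghat` in terms of `gwf`. -/
lemma Ghat_eq {d n : ℕ} (ρ : Fin n → Matrix (Fin d) (Fin d) ℂ) (p : Fin n → ℝ)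
    (F : Equiv.Perm (Fin n) → Matrix (Fin d) (Fin d) ℂ) :
    Ghat ρ p F = ∑ σ : Equiv.Perm (Fin n), gwf ρ p (F σ) σ⁻¹ := by
  unfold Ghat gwf
  refine Finset.sum_congr rfl fun σ _ => ?_
  refine Fintype.sum_equiv σ _ _ fun t => ?_
  simp

lemma ghat_nonneg {d n : ℕ} {ρ : Fin n → Matrix (Fin d) (Fin d) ℂ} {p : Fin n → ℝ}
    (hρ : ∀ x, (ρ x).PosSemidef) (hp : ∀ x, 0 ≤ p x)
    {F : Equiv.Perm (Fin n) → Matrix (Fin d) (Fin d) ℂ} (hF : IsPOVM F) :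
    0 ≤ Ghat ρ p F := by
  rw [Ghat_eq]
  exact Finset.sum_nonneg fun σ _ => gwf_nonneg hρ hp (hF.1 σ) _

lemma gopt_le_ghat {d n : ℕ} {ρ : Fin n → Matrix (Fin d) (Fin d) ℂ} {p : Fin n → ℝ}
    (F : Equiv.Perm (Fin n) → Matrix (Fin d) (Fin d) ℂ) :
    Gopt ρ p F ≤ Ghat ρ p F := by
  rw [Ghat_eq, Gopt_eq]
  exact Finset.sum_le_sum fun σ _ => ciInf_le (iInf_gwf_bddBelow ρ p (F σ)) σ⁻¹

lemma gopt_nonneg {d n : ℕ} {ρ : Fin n → Matrix (Fin d) (Fin d) ℂ} {p : Fin n → ℝ}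
    (hρ : ∀ x, (ρ x).PosSemidef) (hp : ∀ x, 0 ≤ p x)
    {Y : Type*} [Fintype Y] {E : Y → Matrix (Fin d) (Fin d) ℂ} (hE : IsPOVM E) :
    0 ≤ Gopt ρ p E := by
  rw [Gopt_eq]
  exact Finset.sum_nonneg fun y _ => le_ciInf fun τ => gwf_nonneg hρ hp (hE.1 y) τ

/-- The trivial POVM. -/
lemma povm_nonempty {d n : ℕ} :
    Nonempty {F : Equiv.Perm (Fin n) → Matrix (Fin d) (Fin d) ℂ // IsPOVM F} := by
  refine ⟨⟨fun σ => if σ = 1 then 1 else 0, ?_, ?_⟩⟩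
  · intro σ; by_cases h : σ = 1 <;> simp [h, Matrix.PosSemidef.zero, Matrix.PosSemidef.one]
  · simp

/-- Key construction: a POVM on `S_n` with the same `Ĝ` as `G(E)`. -/
lemma exists_povm_ghat_eq_gopt {d n : ℕ} (ρ : Fin n → Matrix (Fin d) (Fin d) ℂ)
    (p : Fin n → ℝ) {Y : Type} [Fintype Y] (E : Y → Matrix (Fin d) (Fin d) ℂ)
    (hE : IsPOVM E) :
    ∃ F : Equiv.Perm (Fin n) → Matrix (Fin d) (Fin d) ℂ, IsPOVM F ∧
      Ghat ρ p F = Gopt ρ p E := by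
  classical
  have hmin : ∀ y : Y, ∃ τ0, ∀ τ, gwf ρ p (E y) τ0 ≤ gwf ρ p (E y) τ :=
    fun y => Finite.exists_min _
  choose τc hτc using hmin
  refine ⟨fun σ => ∑ y ∈ Finset.univ.filter (fun y => (τc y)⁻¹ = σ), E y, ⟨?_, ?_⟩, ?_⟩
  · intro σ
    exact Finset.sum_induction _ _ (fun a b ha hb => ha.add hb) Matrix.PosSemidef.zero
      (fun y _ => hE.1 y)
  · rw [Finset.sum_fiberwise]; exact hE.2
  · rw [Ghat_eq, Gopt_eq]
    have h1 : ∀ σ : Equiv.Perm (Fin n),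
        gwf ρ p (∑ y ∈ Finset.univ.filter (fun y => (τc y)⁻¹ = σ), E y) σ⁻¹
          = ∑ y ∈ Finset.univ.filter (fun y => (τc y)⁻¹ = σ), gwf ρ p (E y) (τc y) := by
      intro σ
      rw [gwf_sum]
      refine Finset.sum_congr rfl fun y hy => ?_
      have : (τc y)⁻¹ = σ := (Finset.mem_filter.mp hy).2
      rw [← this, inv_inv]
    calc ∑ σ : Equiv.Perm (Fin n),
          gwf ρ p (∑ y ∈ Finset.univ.filter (fun y => (τc y)⁻¹ = σ), E y) σ⁻¹
        = ∑ σ : Equiv.Perm (Fin n), ∑ y ∈ Finset.univ.filter (fun y => (τc y)⁻¹ = σ),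
            gwf ρ p (E y) (τc y) := Finset.sum_congr rfl fun σ _ => h1 σ
      _ = ∑ y : Y, gwf ρ p (E y) (τc y) := Finset.sum_fiberwise _ _ _
      _ = ∑ y : Y, ⨅ τ, gwf ρ p (E y) τ := by
          refine Finset.sum_congr rfl fun y _ => ?_
          exact le_antisymm (le_ciInf (hτc y)) (ciInf_le (iInf_gwf_bddBelow ρ p (E y)) (τc y))

/-- equivalence of the two definitions of quantum guesswork. -/
theorem guesswork_defs_equivalent {d n : ℕ}
    (ρ : Fin n → Matrix (Fin d) (Fin d) ℂ) (p : Fin n → ℝ)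
    (hρ : ∀ x, (ρ x).PosSemidef) (hρtr : ∀ x, (ρ x).trace = 1)
    (hp : ∀ x, 0 ≤ p x) (hpsum : ∑ x, p x = 1) :
    (∀ (Y : Type) [Fintype Y] (E : Y → Matrix (Fin d) (Fin d) ℂ), IsPOVM E →
      (⨅ F : {F : Equiv.Perm (Fin n) → Matrix (Fin d) (Fin d) ℂ // IsPOVM F},
        Ghat ρ p F.1) ≤ Gopt ρ p E) ∧
    (⨅ F : {F : Equiv.Perm (Fin n) → Matrix (Fin d) (Fin d) ℂ // IsPOVM F},
        Gopt ρ p F.1) =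
      ⨅ F : {F : Equiv.Perm (Fin n) → Matrix (Fin d) (Fin d) ℂ // IsPOVM F},
        Ghat ρ p F.1 := by
  haveI : Nonempty {F : Equiv.Perm (Fin n) → Matrix (Fin d) (Fin d) ℂ // IsPOVM F} :=
    povm_nonempty
  have hbddGhat : BddBelow (Set.range fun F :
      {F : Equiv.Perm (Fin n) → Matrix (Fin d) (Fin d) ℂ // IsPOVM F} => Ghat ρ p F.1) :=
    ⟨0, by rintro x ⟨F, rfl⟩; exact ghat_nonneg hρ hp F.2⟩
  have hbddGopt : BddBelow (Set.range fun F :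
      {F : Equiv.Perm (Fin n) → Matrix (Fin d) (Fin d) ℂ // IsPOVM F} => Gopt ρ p F.1) :=
    ⟨0, by rintro x ⟨F, rfl⟩; exact gopt_nonneg hρ hp F.2⟩
  have part1 : ∀ (Y : Type) [Fintype Y] (E : Y → Matrix (Fin d) (Fin d) ℂ), IsPOVM E →
      (⨅ F : {F : Equiv.Perm (Fin n) → Matrix (Fin d) (Fin d) ℂ // IsPOVM F},
        Ghat ρ p F.1) ≤ Gopt ρ p E := by
    intro Y _ E hE
    obtain ⟨F, hF, hFe⟩ := exists_povm_ghat_eq_gopt ρ p E hE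
    rw [← hFe]
    exact ciInf_le hbddGhat ⟨F, hF⟩
  refine ⟨part1, le_antisymm ?_ ?_⟩
  · exact le_ciInf fun F => (ciInf_le hbddGopt F).trans (gopt_le_ghat F.1)
  · exact le_ciInf fun F => part1 _ F.1 F.2


end
end

section
/- Closed form for quantum guesswork (Dall'Arno): if there exists σ* ∈ S_n such that |𝓔_{σ*}| ≥ |𝓔_σ| in the Loewner order for all σ ∈ S_n, then the quantum guesswork satisfies G(ρ,p) = (n+1)/2 − (1/2)·‖𝓔_{σ*}‖. -/
open Matrix BigOperators Finset ComplexOrder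

noncomputable section

/-! ### Auxiliary lemmas -/

section Aux

variable {d n : ℕ}

lemma herApply_def {A : Matrix (Fin d) (Fin d) ℂ} (hA : A.IsHermitian) (f : ℝ → ℝ) :
    herApply f A = (hA.eigenvectorUnitary : Matrix (Fin d) (Fin d) ℂ) *
      Matrix.diagonal (fun i => (f (hA.eigenvalues i) : ℂ)) *
      star (hA.eigenvectorUnitary : Matrix (Fin d) (Fin d) ℂ) := dif_pos hA

lemma conj_mul_conj {U D1 D2 : Matrix (Fin d) (Fin d) ℂ} (h1 : star U * U = 1) :
    (U * D1 * star U) * (U * D2 * star U) = U * (D1 * D2) * star U := by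
  simp only [Matrix.mul_assoc]
  rw [← Matrix.mul_assoc (star U) U, h1, Matrix.one_mul]

lemma herApply_mul {A : Matrix (Fin d) (Fin d) ℂ} (hA : A.IsHermitian) (f g : ℝ → ℝ) :
    herApply f A * herApply g A = herApply (fun x => f x * g x) A := by
  rw [herApply_def hA, herApply_def hA, herApply_def hA,
    conj_mul_conj (Matrix.UnitaryGroup.star_mul_self hA.eigenvectorUnitary),
    Matrix.diagonal_mul_diagonal]
  congr 2
  funext i
  simp [Complex.ofReal_mul]

lemma herApply_add {A : Matrix (Fin d) (Fin d) ℂ} (hA : A.IsHermitian) (f g : ℝ → ℝ) :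
    herApply f A + herApply g A = herApply (fun x => f x + g x) A := by
  rw [herApply_def hA, herApply_def hA, herApply_def hA, ← Matrix.add_mul, ← Matrix.mul_add,
    Matrix.diagonal_add]
  congr 2
  funext i
  simp [Complex.ofReal_add]

lemma herApply_id {A : Matrix (Fin d) (Fin d) ℂ} (hA : A.IsHermitian) :
    herApply (fun x => x) A = A := by
  rw [herApply_def hA]
  conv_rhs => rw [hA.spectral_theorem]
  rfl

lemma herApply_one {A : Matrix (Fin d) (Fin d) ℂ} (hA : A.IsHermitian) :
    herApply (fun _ => 1) A = 1 := by
  rw [herApply_def hA]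
  have : (Matrix.diagonal (fun _ : Fin d => ((1 : ℝ) : ℂ))) = 1 := by
    simp [Matrix.diagonal_one]
  rw [this, Matrix.mul_one]
  exact Matrix.mem_unitaryGroup_iff.mp hA.eigenvectorUnitary.2

lemma herApply_sub {A : Matrix (Fin d) (Fin d) ℂ} (hA : A.IsHermitian) (f g : ℝ → ℝ) :
    herApply f A - herApply g A = herApply (fun x => f x - g x) A := by
  have := herApply_add hA (fun x => f x - g x) g
  simp only [sub_add_cancel] at this
  rw [← this]
  abel

lemma one_sub_herApply {A : Matrix (Fin d) (Fin d) ℂ} (hA : A.IsHermitian) (f : ℝ → ℝ) :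
    (1 : Matrix (Fin d) (Fin d) ℂ) - herApply f A = herApply (fun x => 1 - f x) A := by
  rw [← herApply_one hA, herApply_sub hA]

lemma herApply_posSemidef {A : Matrix (Fin d) (Fin d) ℂ} (hA : A.IsHermitian) {f : ℝ → ℝ}
    (hf : ∀ x, 0 ≤ f x) : (herApply f A).PosSemidef := by
  rw [herApply_def hA]
  have hD : (Matrix.diagonal (fun i => ((f (hA.eigenvalues i) : ℝ) : ℂ))).PosSemidef :=
    Matrix.PosSemidef.diagonal (fun i => Complex.zero_le_real.mpr (hf _))
  have := hD.mul_mul_conjTranspose_same (hA.eigenvectorUnitary : Matrix (Fin d) (Fin d) ℂ)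
  simpa [Matrix.star_eq_conjTranspose] using this

lemma herApply_trace_re {A : Matrix (Fin d) (Fin d) ℂ} (hA : A.IsHermitian) (f : ℝ → ℝ) :
    (herApply f A).trace.re = ∑ i, f (hA.eigenvalues i) := by
  rw [herApply_def hA, Matrix.trace_mul_cycle,
    Matrix.UnitaryGroup.star_mul_self hA.eigenvectorUnitary, Matrix.one_mul,
    Matrix.trace_diagonal]
  rw [Complex.re_sum]
  simp

lemma herApply_mul_self_trace_re {A : Matrix (Fin d) (Fin d) ℂ} (hA : A.IsHermitian)
    (f : ℝ → ℝ) :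
    (herApply f A * A).trace.re = ∑ i, f (hA.eigenvalues i) * hA.eigenvalues i := by
  have h : herApply f A * A = herApply (fun x => f x * x) A := by
    conv_lhs => rhs; rw [show A = herApply (fun x => x) A from (herApply_id hA).symm]
    rw [herApply_mul hA f (fun x => x)]
  rw [h, herApply_trace_re hA]

lemma posSemidef_trace_re_nonneg {M : Matrix (Fin d) (Fin d) ℂ} (hM : M.PosSemidef) :
    0 ≤ M.trace.re := by
  have hdiag : ∀ i, 0 ≤ M i i := by
    intro i
    exact hM.diag_nonneg
  rw [Matrix.trace, Complex.re_sum]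
  exact Finset.sum_nonneg fun i _ => (Complex.le_def.mp (hdiag i)).1

lemma trace_mul_re_nonneg_s1 {M N : Matrix (Fin d) (Fin d) ℂ} (hM : M.PosSemidef)
    (hN : N.PosSemidef) : 0 ≤ (M * N).trace.re := by
  obtain ⟨S, hs, hSh⟩ : ∃ S : Matrix (Fin d) (Fin d) ℂ, S * S = M ∧ Sᴴ = S := by
    open scoped MatrixOrder in
    exact ⟨CFC.sqrt M, CFC.sqrt_mul_sqrt_self M hM.nonneg, (CFC.sqrt_nonneg M).posSemidef.1.eq⟩
  have h1 : (M * N).trace = (S * N * S).trace := by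
    rw [Matrix.trace_mul_cycle, hs]
  have h2 : (S * N * S).PosSemidef := by
    have := hN.conjTranspose_mul_mul_same S
    rwa [hSh] at this
  rw [h1]
  exact posSemidef_trace_re_nonneg h2

lemma calE_isHermitian (ρ : Fin n → Matrix (Fin d) (Fin d) ℂ) (p : Fin n → ℝ)
    (hρ : ∀ x, (ρ x).PosSemidef) (σ : Equiv.Perm (Fin n)) : (calE ρ p σ).IsHermitian := by
  unfold calE Matrix.IsHermitian
  rw [Matrix.conjTranspose_sum]
  refine Finset.sum_congr rfl fun t _ => ?_
  rw [Matrix.conjTranspose_smul, star_trivial, (hρ (σ t)).1.eq]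

lemma calE_permBar (ρ : Fin n → Matrix (Fin d) (Fin d) ℂ) (p : Fin n → ℝ)
    (σ : Equiv.Perm (Fin n)) : calE ρ p (permBar σ) = - calE ρ p σ := by
  unfold calE permBar
  have key : ∀ t : Fin n,
      ((2 * ((t.val : ℝ) + 1) - n - 1) * p ((σ * Fin.revPerm : Equiv.Perm (Fin n)) t)) • ρ ((σ * Fin.revPerm : Equiv.Perm (Fin n)) t)
      = (fun s : Fin n => -(((2 * ((s.val : ℝ) + 1) - n - 1) * p (σ s)) • ρ (σ s)))
          (Fin.revPerm t) := by
    intro t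
    have h1 : ((σ * Fin.revPerm : Equiv.Perm (Fin n)) t) = σ (Fin.revPerm t) := rfl
    have h2 : ((Fin.revPerm t).val : ℝ) = (n : ℝ) - ((t.val : ℝ) + 1) := by
      have hv : (Fin.revPerm t).val = n - (t.val + 1) := by
        simp [Fin.revPerm_apply, Fin.val_rev]
      rw [hv, Nat.cast_sub t.isLt]
      push_cast
      ring
    simp only [h1, ← neg_smul]
    congr 1
    rw [h2]
    ring
  rw [Finset.sum_congr rfl (fun t _ => key t),
    Equiv.sum_comp (Fin.revPerm : Equiv.Perm (Fin n))
      (fun s : Fin n => -(((2 * ((s.val : ℝ) + 1) - (n : ℝ) - 1) * p (σ s)) • ρ (σ s)))]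
  simp

lemma trace_mul_calE_re (ρ : Fin n → Matrix (Fin d) (Fin d) ℂ) (p : Fin n → ℝ)
    (M : Matrix (Fin d) (Fin d) ℂ) (σ : Equiv.Perm (Fin n)) :
    (M * calE ρ p σ).trace.re
      = ∑ t : Fin n, (2 * ((t.val : ℝ) + 1) - n - 1) * p (σ t) * ((M * ρ (σ t)).trace.re) := by
  unfold calE
  rw [Matrix.mul_sum, Matrix.trace_sum, Complex.re_sum]
  refine Finset.sum_congr rfl fun t _ => ?_
  rw [mul_smul_comm, Matrix.trace_smul, Complex.smul_re, smul_eq_mul]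

lemma trace_mul_avg_re (ρ : Fin n → Matrix (Fin d) (Fin d) ℂ) (p : Fin n → ℝ)
    (M : Matrix (Fin d) (Fin d) ℂ) :
    (M * (∑ x, p x • ρ x)).trace.re = ∑ x : Fin n, p x * ((M * ρ x).trace.re) := by
  rw [Matrix.mul_sum, Matrix.trace_sum, Complex.re_sum]
  refine Finset.sum_congr rfl fun x _ => ?_
  rw [mul_smul_comm, Matrix.trace_smul, Complex.smul_re, smul_eq_mul]

/-- Decomposition of the guesswork of a POVM. -/
lemma ghat_decomp (ρ : Fin n → Matrix (Fin d) (Fin d) ℂ) (p : Fin n → ℝ)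
    (hρtr : ∀ x, (ρ x).trace = 1) (hpsum : ∑ x, p x = 1)
    (E : Equiv.Perm (Fin n) → Matrix (Fin d) (Fin d) ℂ) (hE : IsPOVM E) :
    Ghat ρ p E = ((n : ℝ) + 1) / 2
      + (1 / 2) * ∑ σ : Equiv.Perm (Fin n), ((E σ * calE ρ p σ).trace.re) := by
  have step1 : ∀ σ : Equiv.Perm (Fin n),
      ∑ t : Fin n, ((t.val : ℝ) + 1) * p (σ t) * ((E σ * ρ (σ t)).trace.re)
        = ((n : ℝ) + 1) / 2 * ((E σ * (∑ x, p x • ρ x)).trace.re)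
          + (1 / 2) * ((E σ * calE ρ p σ).trace.re) := by
    intro σ
    rw [trace_mul_calE_re, trace_mul_avg_re]
    rw [← Equiv.sum_comp σ (fun x : Fin n => p x * ((E σ * ρ x).trace.re))]
    rw [Finset.mul_sum, Finset.mul_sum, ← Finset.sum_add_distrib]
    refine Finset.sum_congr rfl fun t _ => ?_
    ring
  have step2 : ∑ σ : Equiv.Perm (Fin n), ((E σ * (∑ x, p x • ρ x)).trace.re) = 1 := by
    rw [← Complex.re_sum, ← Matrix.trace_sum, ← Matrix.sum_mul, hE.2, Matrix.one_mul,
      Matrix.trace_sum, Complex.re_sum]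
    have : ∀ x : Fin n, ((p x • ρ x).trace).re = p x := by
      intro x
      rw [Matrix.trace_smul, hρtr x, Complex.smul_re, Complex.one_re, smul_eq_mul, mul_one]
    rw [Finset.sum_congr rfl (fun x _ => this x), hpsum]
  unfold Ghat
  rw [Finset.sum_congr rfl (fun σ _ => step1 σ), Finset.sum_add_distrib,
    ← Finset.mul_sum, ← Finset.mul_sum, step2, mul_one]

/-- Lower bound on the guesswork of any POVM. -/
lemma ghat_lower_bound (ρ : Fin n → Matrix (Fin d) (Fin d) ℂ) (p : Fin n → ℝ)
    (hρ : ∀ x, (ρ x).PosSemidef) (hρtr : ∀ x, (ρ x).trace = 1) (hpsum : ∑ x, p x = 1)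
    (σs : Equiv.Perm (Fin n))
    (hσs : ∀ σ : Equiv.Perm (Fin n),
      (matAbs (calE ρ p σs) - matAbs (calE ρ p σ)).PosSemidef)
    (E : Equiv.Perm (Fin n) → Matrix (Fin d) (Fin d) ℂ) (hE : IsPOVM E) :
    ((n : ℝ) + 1) / 2 - (1 / 2) * traceNorm (calE ρ p σs) ≤ Ghat ρ p E := by
  rw [ghat_decomp ρ p hρtr hpsum E hE]
  have key : ∀ σ : Equiv.Perm (Fin n),
      -((E σ * matAbs (calE ρ p σs)).trace.re) ≤ (E σ * calE ρ p σ).trace.re := by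
    intro σ
    have hB : (calE ρ p σ).IsHermitian := calE_isHermitian ρ p hρ σ
    have h1 : 0 ≤ (E σ * (calE ρ p σ + matAbs (calE ρ p σ))).trace.re := by
      refine trace_mul_re_nonneg_s1 (hE.1 σ) ?_
      have hadd : calE ρ p σ + matAbs (calE ρ p σ)
          = herApply (fun x => x + |x|) (calE ρ p σ) := by
        have h := herApply_add hB (fun x => x) (fun x => |x|)
        rw [herApply_id hB] at h
        rw [matAbs]
        exact h
      rw [hadd]
      exact herApply_posSemidef hB fun x => by
        have := neg_abs_le x; linarith
    have h2 : 0 ≤ (E σ * (matAbs (calE ρ p σs) - matAbs (calE ρ p σ))).trace.re :=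
      trace_mul_re_nonneg_s1 (hE.1 σ) (hσs σ)
    have h3 : E σ * calE ρ p σ + E σ * matAbs (calE ρ p σs)
        = E σ * (calE ρ p σ + matAbs (calE ρ p σ))
          + E σ * (matAbs (calE ρ p σs) - matAbs (calE ρ p σ)) := by
      noncomm_ring
    have h4 := congrArg (fun m : Matrix (Fin d) (Fin d) ℂ => m.trace.re) h3
    simp only [Matrix.trace_add, Complex.add_re] at h4
    linarith
  have hsum : -traceNorm (calE ρ p σs)
      ≤ ∑ σ : Equiv.Perm (Fin n), ((E σ * calE ρ p σ).trace.re) := by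
    have h5 : ∑ σ : Equiv.Perm (Fin n), ((E σ * matAbs (calE ρ p σs)).trace.re)
        = traceNorm (calE ρ p σs) := by
      rw [← Complex.re_sum, ← Matrix.trace_sum, ← Matrix.sum_mul, hE.2, Matrix.one_mul]
      rfl
    calc -traceNorm (calE ρ p σs)
        = ∑ σ : Equiv.Perm (Fin n), -((E σ * matAbs (calE ρ p σs)).trace.re) := by
          rw [Finset.sum_neg_distrib, h5]
      _ ≤ _ := Finset.sum_le_sum fun σ _ => key σ
  linarith

end Aux

/-- Dall'Arno's closed form for the quantum guesswork. -/
theorem quantum_guesswork_closed_form {d n : ℕ}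
    (ρ : Fin n → Matrix (Fin d) (Fin d) ℂ) (p : Fin n → ℝ)
    (hρ : ∀ x, (ρ x).PosSemidef) (hρtr : ∀ x, (ρ x).trace = 1)
    (hp : ∀ x, 0 ≤ p x) (hpsum : ∑ x, p x = 1)
    (σs : Equiv.Perm (Fin n))
    (hσs : ∀ σ : Equiv.Perm (Fin n),
      (matAbs (calE ρ p σs) - matAbs (calE ρ p σ)).PosSemidef) :
    QGuesswork ρ p = ((n : ℝ) + 1) / 2 - (1 / 2) * traceNorm (calE ρ p σs) := by
  have hA : (calE ρ p σs).IsHermitian := calE_isHermitian ρ p hρ σs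
  set A := calE ρ p σs with hAdef
  set G := herApply gNeg A with hGdef
  set F : Equiv.Perm (Fin n) → Matrix (Fin d) (Fin d) ℂ :=
    fun σ => (if σ = σs then G else 0) + (if σ = permBar σs then 1 - G else 0) with hFdef
  have hg0 : ∀ x : ℝ, 0 ≤ gNeg x := by
    intro x; unfold gNeg; split_ifs <;> norm_num
  have hg1 : ∀ x : ℝ, gNeg x ≤ 1 := by
    intro x; unfold gNeg; split_ifs <;> norm_num
  have hF : IsPOVM F := by
    constructor
    · intro σ
      refine Matrix.PosSemidef.add ?_ ?_
      · split_ifs with h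
        · exact herApply_posSemidef hA hg0
        · exact Matrix.PosSemidef.zero
      · split_ifs with h
        · rw [hGdef, one_sub_herApply hA]
          exact herApply_posSemidef hA fun x => by linarith [hg1 x]
        · exact Matrix.PosSemidef.zero
    · rw [Finset.sum_add_distrib,
        Finset.sum_ite_eq' Finset.univ σs (fun _ => G),
        Finset.sum_ite_eq' Finset.univ (permBar σs) (fun _ => 1 - G)]
      simp
  have hTrA : A.trace.re = ∑ i, hA.eigenvalues i := by
    conv_lhs => rw [← herApply_id hA]
    rw [herApply_trace_re hA]
  have hTN : traceNorm A = ∑ i, |hA.eigenvalues i| := by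
    rw [traceNorm, matAbs, herApply_trace_re hA]
  have hS : (G * A).trace.re
      = ((∑ i, hA.eigenvalues i) - ∑ i, |hA.eigenvalues i|) / 2 := by
    rw [hGdef, herApply_mul_self_trace_re hA]
    have hpt : ∀ x : ℝ, gNeg x * x = (x - |x|) / 2 := by
      intro x
      unfold gNeg
      split_ifs with h1 h2
      · rw [abs_of_neg h1]; ring
      · rw [h2]; simp
      · rw [abs_of_pos (lt_of_le_of_ne (not_lt.mp h1) (Ne.symm h2))]; ring
    rw [Finset.sum_congr rfl (fun i _ => hpt (hA.eigenvalues i)),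
      ← Finset.sum_div, Finset.sum_sub_distrib]
  have hGF : Ghat ρ p F = ((n : ℝ) + 1) / 2 - (1 / 2) * traceNorm A := by
    rw [ghat_decomp ρ p hρtr hpsum F hF]
    have expand : ∀ σ : Equiv.Perm (Fin n), ((F σ * calE ρ p σ).trace.re)
        = (if σ = σs then ((G * calE ρ p σ).trace.re) else 0)
          + (if σ = permBar σs then (((1 - G) * calE ρ p σ).trace.re) else 0) := by
      intro σ
      rw [hFdef]
      simp only [Matrix.add_mul, Matrix.trace_add, Complex.add_re]
      congr 1
      · split_ifs <;> simp
      · split_ifs <;> simp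
    have hsum : ∑ σ : Equiv.Perm (Fin n), ((F σ * calE ρ p σ).trace.re) = -traceNorm A := by
      rw [Finset.sum_congr rfl (fun σ _ => expand σ), Finset.sum_add_distrib,
        Finset.sum_ite_eq' Finset.univ σs (fun σ => ((G * calE ρ p σ).trace.re)),
        Finset.sum_ite_eq' Finset.univ (permBar σs)
          (fun σ => (((1 - G) * calE ρ p σ).trace.re))]
      simp only [Finset.mem_univ, if_true]
      rw [calE_permBar ρ p σs, ← hAdef]
      have e1 : (1 - G) * (-A) = G * A - A := by noncomm_ring
      rw [e1, Matrix.trace_sub, Complex.sub_re]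
      rw [hTN] at *
      linarith [hS, hTrA]
    rw [hsum]
    ring
  have hbdd : BddBelow (Set.range
      fun (E : {E : Equiv.Perm (Fin n) → Matrix (Fin d) (Fin d) ℂ // IsPOVM E}) =>
        Ghat ρ p E.1) := by
    refine ⟨((n : ℝ) + 1) / 2 - (1 / 2) * traceNorm A, ?_⟩
    rintro x ⟨E, rfl⟩
    exact ghat_lower_bound ρ p hρ hρtr hpsum σs hσs E.1 E.2
  have hne : Nonempty {E : Equiv.Perm (Fin n) → Matrix (Fin d) (Fin d) ℂ // IsPOVM E} :=
    ⟨⟨F, hF⟩⟩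
  apply le_antisymm
  · calc QGuesswork ρ p ≤ Ghat ρ p F :=
          ciInf_le hbdd (⟨F, hF⟩ : {E : Equiv.Perm (Fin n) → Matrix (Fin d) (Fin d) ℂ // IsPOVM E})
      _ = _ := hGF
  · exact le_ciInf fun E => ghat_lower_bound ρ p hρ hρtr hpsum σs hσs E.1 E.2

end
end

section
/- Lower bound direction: if there exists σ* ∈ S_n such that |𝓔_{σ*}| ≥ |𝓔_σ| in the Loewner order for all σ ∈ S_n, then for every POVM E indexed by S_n one has Ĝ(ρ,p;E) ≥ (n+1)/2 − (1/2)·‖𝓔_{σ*}‖. -/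
open Matrix BigOperators Finset ComplexOrder

noncomputable section

-- auxiliary lemmas

lemma aux_diag_re_nonneg {d : ℕ} {A : Matrix (Fin d) (Fin d) ℂ} (hA : A.PosSemidef) :
    0 ≤ A.trace.re := by
  have h : ∀ i, 0 ≤ (A i i).re := by
    intro i
    have h := hA.re_dotProduct_nonneg (Pi.single i 1)
    simpa [dotProduct, mulVec, Pi.single_apply] using h
  simp only [Matrix.trace, Matrix.diag, Complex.re_sum]
  exact Finset.sum_nonneg fun i _ => h i

open scoped MatrixOrder in
lemma aux_trace_mul_nonneg {d : ℕ} {A B : Matrix (Fin d) (Fin d) ℂ}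
    (hA : A.PosSemidef) (hB : B.PosSemidef) : 0 ≤ (A * B).trace.re := by
  have h1 : (A * B).trace = (CFC.sqrt A * B * CFC.sqrt A).trace := by
    rw [Matrix.trace_mul_cycle, CFC.sqrt_mul_sqrt_self A hA.nonneg]
  have h2 : (CFC.sqrt A * B * CFC.sqrt A).PosSemidef := by
    have := hB.mul_mul_conjTranspose_same (CFC.sqrt A)
    rwa [(CFC.sqrt_nonneg A).posSemidef.isHermitian.eq] at this
  rw [h1]
  exact aux_diag_re_nonneg h2

lemma aux_herApply_add_psd {d : ℕ} {A : Matrix (Fin d) (Fin d) ℂ} (hA : A.IsHermitian)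
    (f : ℝ → ℝ) (hf : ∀ x, 0 ≤ f x + x) : (herApply f A + A).PosSemidef := by
  rw [herApply, dif_pos hA]
  set U : Matrix (Fin d) (Fin d) ℂ := (hA.eigenvectorUnitary : Matrix (Fin d) (Fin d) ℂ) with hU
  have key : U * Matrix.diagonal (fun i => ((f (hA.eigenvalues i) : ℝ) : ℂ)) * star U + A
      = U * Matrix.diagonal (fun i => ((f (hA.eigenvalues i) + hA.eigenvalues i : ℝ) : ℂ)) * star U := by
    have h2 : (Matrix.diagonal (fun i => ((f (hA.eigenvalues i) + hA.eigenvalues i : ℝ) : ℂ)))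
        = Matrix.diagonal (fun i => ((f (hA.eigenvalues i) : ℝ) : ℂ))
          + Matrix.diagonal (RCLike.ofReal ∘ hA.eigenvalues) := by
      rw [Matrix.diagonal_add]; congr 1; funext i; push_cast; simp [Function.comp]
    rw [h2, Matrix.mul_add, Matrix.add_mul]
    congr 1
    exact hA.spectral_theorem
  rw [key]
  have hdiag : (Matrix.diagonal (fun i => ((f (hA.eigenvalues i) + hA.eigenvalues i : ℝ) : ℂ))).PosSemidef := by
    refine Matrix.posSemidef_diagonal_iff.mpr fun i => ?_
    show (0:ℂ) ≤ ((f (hA.eigenvalues i) + hA.eigenvalues i : ℝ) : ℂ)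
    rw [Complex.zero_le_real]
    exact hf _
  have := hdiag.mul_mul_conjTranspose_same U
  simpa [Matrix.star_eq_conjTranspose, Matrix.mul_assoc] using this

lemma aux_matAbs_add_psd {d : ℕ} {A : Matrix (Fin d) (Fin d) ℂ} (hA : A.IsHermitian) :
    (matAbs A + A).PosSemidef :=
  aux_herApply_add_psd hA (fun x => |x|) (fun x => by linarith [neg_abs_le x])

lemma aux_calE_herm {d n : ℕ} (ρ : Fin n → Matrix (Fin d) (Fin d) ℂ) (p : Fin n → ℝ)
    (hρ : ∀ x, (ρ x).PosSemidef) (σ : Equiv.Perm (Fin n)) : (calE ρ p σ).IsHermitian := by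
  show (calE ρ p σ)ᴴ = calE ρ p σ
  simp [calE, Matrix.conjTranspose_sum, Matrix.conjTranspose_smul, (hρ _).isHermitian.eq]

lemma aux_re_trace_mul_calE {d n : ℕ} (ρ : Fin n → Matrix (Fin d) (Fin d) ℂ) (p : Fin n → ℝ)
    (σ : Equiv.Perm (Fin n)) (E' : Matrix (Fin d) (Fin d) ℂ) :
    ((E' * calE ρ p σ).trace).re
      = ∑ t : Fin n, (2 * ((t.val : ℝ) + 1) - n - 1) * p (σ t) * ((E' * ρ (σ t)).trace).re := by
  simp [calE, Matrix.mul_sum, Matrix.trace_sum, Complex.re_sum, mul_smul_comm,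
    Matrix.trace_smul, Complex.real_smul]

theorem aux_main {d n : ℕ}
    (ρ : Fin n → Matrix (Fin d) (Fin d) ℂ) (p : Fin n → ℝ)
    (hρ : ∀ x, (ρ x).PosSemidef) (hρtr : ∀ x, (ρ x).trace = 1)
    (hp : ∀ x, 0 ≤ p x) (hpsum : ∑ x, p x = 1)
    (σs : Equiv.Perm (Fin n))
    (hσs : ∀ σ : Equiv.Perm (Fin n),
      (matAbs (calE ρ p σs) - matAbs (calE ρ p σ)).PosSemidef)
    (E : Equiv.Perm (Fin n) → Matrix (Fin d) (Fin d) ℂ)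
    (hEpsd : ∀ y, (E y).PosSemidef) (hEsum : ∑ y, E y = 1) :
    ((n : ℝ) + 1) / 2 - (1 / 2) * (matAbs (calE ρ p σs)).trace.re ≤
      ∑ σ : Equiv.Perm (Fin n), ∑ t : Fin n,
        ((t.val : ℝ) + 1) * p (σ t) * ((E σ * ρ (σ t)).trace.re) := by
  set M := matAbs (calE ρ p σs) with hM
  -- step 1: total probability sum
  have hT : ∀ σ : Equiv.Perm (Fin n),
      ∑ t : Fin n, p (σ t) * ((E σ * ρ (σ t)).trace).re
        = ∑ x : Fin n, p x * ((E σ * ρ x).trace).re := fun σ =>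
    Equiv.sum_comp σ (fun x => p x * ((E σ * ρ x).trace).re)
  have hTtot : ∑ σ : Equiv.Perm (Fin n), ∑ t : Fin n,
      p (σ t) * ((E σ * ρ (σ t)).trace).re = 1 := by
    calc ∑ σ : Equiv.Perm (Fin n), ∑ t : Fin n, p (σ t) * ((E σ * ρ (σ t)).trace).re
        = ∑ σ : Equiv.Perm (Fin n), ∑ x : Fin n, p x * ((E σ * ρ x).trace).re := by
          exact Finset.sum_congr rfl fun σ _ => hT σ
      _ = ∑ x : Fin n, p x * ((∑ σ : Equiv.Perm (Fin n), E σ) * ρ x).trace.re := by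
          rw [Finset.sum_comm]
          refine Finset.sum_congr rfl fun x _ => ?_
          simp [Matrix.sum_mul, Matrix.trace_sum, Complex.re_sum, Finset.mul_sum]
      _ = ∑ x : Fin n, p x * ((ρ x).trace).re := by
          simp [hEsum]
      _ = 1 := by
          simp only [hρtr]
          simpa using hpsum
  -- step 2: decompose Ghat
  have hGhat : ∑ σ : Equiv.Perm (Fin n), ∑ t : Fin n,
      ((t.val : ℝ) + 1) * p (σ t) * ((E σ * ρ (σ t)).trace.re)
      = ((n : ℝ) + 1) / 2
        + (1/2) * ∑ σ : Equiv.Perm (Fin n), ((E σ * calE ρ p σ).trace).re := by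
    have : ∀ σ : Equiv.Perm (Fin n), ∀ t : Fin n,
        ((t.val : ℝ) + 1) * p (σ t) * ((E σ * ρ (σ t)).trace.re)
        = (1/2) * ((2 * ((t.val : ℝ) + 1) - n - 1) * p (σ t) * ((E σ * ρ (σ t)).trace).re)
          + ((n : ℝ) + 1) / 2 * (p (σ t) * ((E σ * ρ (σ t)).trace).re) := by
      intro σ t; ring
    calc ∑ σ : Equiv.Perm (Fin n), ∑ t : Fin n,
          ((t.val : ℝ) + 1) * p (σ t) * ((E σ * ρ (σ t)).trace.re)
        = ∑ σ : Equiv.Perm (Fin n), ((1/2) * ((E σ * calE ρ p σ).trace).re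
            + ((n : ℝ) + 1) / 2 * ∑ t : Fin n, p (σ t) * ((E σ * ρ (σ t)).trace).re) := by
          refine Finset.sum_congr rfl fun σ _ => ?_
          rw [aux_re_trace_mul_calE, Finset.mul_sum, Finset.mul_sum, ← Finset.sum_add_distrib]
          exact Finset.sum_congr rfl fun t _ => this σ t
      _ = ((n : ℝ) + 1) / 2
        + (1/2) * ∑ σ : Equiv.Perm (Fin n), ((E σ * calE ρ p σ).trace).re := by
          rw [Finset.sum_add_distrib, ← Finset.mul_sum, ← Finset.mul_sum, hTtot]
          ring
  -- step 3: per-σ lower bound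
  have hper : ∀ σ : Equiv.Perm (Fin n),
      -(((E σ * M).trace).re) ≤ ((E σ * calE ρ p σ).trace).re := by
    intro σ
    have hpsd : (calE ρ p σ + M).PosSemidef := by
      have h1 := aux_matAbs_add_psd (aux_calE_herm ρ p hρ σ)
      have h2 := hσs σ
      have := h1.add h2
      convert this using 1
      rw [hM]; abel
    have h3 : 0 ≤ ((E σ * (calE ρ p σ + M)).trace).re :=
      aux_trace_mul_nonneg (hEpsd σ) hpsd
    rw [Matrix.mul_add, Matrix.trace_add] at h3
    simp only [Complex.add_re] at h3
    linarith
  -- step 4: sum of M-traces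
  have hMsum : ∑ σ : Equiv.Perm (Fin n), ((E σ * M).trace).re = M.trace.re := by
    calc ∑ σ : Equiv.Perm (Fin n), ((E σ * M).trace).re
        = (((∑ σ : Equiv.Perm (Fin n), E σ) * M).trace).re := by
          simp [Matrix.sum_mul, Matrix.trace_sum, Complex.re_sum]
      _ = M.trace.re := by rw [hEsum, Matrix.one_mul]
  -- conclude
  rw [hGhat]
  have hS : -(M.trace.re) ≤ ∑ σ : Equiv.Perm (Fin n), ((E σ * calE ρ p σ).trace).re := by
    calc -(M.trace.re) = ∑ σ : Equiv.Perm (Fin n), -(((E σ * M).trace).re) := by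
          rw [Finset.sum_neg_distrib, hMsum]
      _ ≤ _ := Finset.sum_le_sum fun σ _ => hper σ
  linarith

/-- lower bound direction of Dall'Arno's theorem. -/
theorem guesswork_lower_bound {d n : ℕ}
    (ρ : Fin n → Matrix (Fin d) (Fin d) ℂ) (p : Fin n → ℝ)
    (hρ : ∀ x, (ρ x).PosSemidef) (hρtr : ∀ x, (ρ x).trace = 1)
    (hp : ∀ x, 0 ≤ p x) (hpsum : ∑ x, p x = 1)
    (σs : Equiv.Perm (Fin n))
    (hσs : ∀ σ : Equiv.Perm (Fin n),
      (matAbs (calE ρ p σs) - matAbs (calE ρ p σ)).PosSemidef)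
    (E : Equiv.Perm (Fin n) → Matrix (Fin d) (Fin d) ℂ) (hE : IsPOVM E) :
    ((n : ℝ) + 1) / 2 - (1 / 2) * traceNorm (calE ρ p σs) ≤ Ghat ρ p E := by
  obtain ⟨hEpsd, hEsum⟩ := hE
  have := aux_main ρ p hρ hρtr hp hpsum σs hσs E hEpsd hEsum
  simpa [Ghat, traceNorm] using this

end
end

section
/- Unitary invariance of quantum guesswork: for every unitary d×d matrix U, the quantum guesswork of the conjugated ensemble equals that of the original ensemble, i.e. G(fun x => U * ρ x * Uᴴ, p) = G(ρ, p). -/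
open Matrix BigOperators Finset ComplexOrder

noncomputable section

lemma Ghat_conj {d n : ℕ} (ρ : Fin n → Matrix (Fin d) (Fin d) ℂ) (p : Fin n → ℝ)
    (U : Matrix (Fin d) (Fin d) ℂ)
    (E : Equiv.Perm (Fin n) → Matrix (Fin d) (Fin d) ℂ) :
    Ghat (fun x => U * ρ x * Uᴴ) p E = Ghat ρ p (fun σ => Uᴴ * E σ * U) := by
  unfold Ghat
  refine Finset.sum_congr rfl fun σ _ => Finset.sum_congr rfl fun t _ => ?_
  have htr : ((Uᴴ * E σ * U) * ρ (σ t)).trace = (E σ * (U * ρ (σ t) * Uᴴ)).trace := by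
    rw [Matrix.trace_mul_comm,
      show ρ (σ t) * (Uᴴ * E σ * U) = (ρ (σ t) * Uᴴ) * (E σ * U) from by simp [mul_assoc],
      Matrix.trace_mul_comm]
    simp [mul_assoc]
  rw [htr]

lemma isPOVM_conj {d n : ℕ} (U : Matrix (Fin d) (Fin d) ℂ) (hU₂ : Uᴴ * U = 1)
    (E : Equiv.Perm (Fin n) → Matrix (Fin d) (Fin d) ℂ) (hE : IsPOVM E) :
    IsPOVM (fun σ => Uᴴ * E σ * U) := by
  refine ⟨fun σ => (hE.1 σ).conjTranspose_mul_mul_same U, ?_⟩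
  rw [← Finset.sum_mul, ← Finset.mul_sum, hE.2, mul_one, hU₂]

/-- unitary invariance of the quantum guesswork. -/
theorem quantum_guesswork_unitary_invariant {d n : ℕ}
    (ρ : Fin n → Matrix (Fin d) (Fin d) ℂ) (p : Fin n → ℝ)
    (hρ : ∀ x, (ρ x).PosSemidef) (hρtr : ∀ x, (ρ x).trace = 1)
    (hp : ∀ x, 0 ≤ p x) (hpsum : ∑ x, p x = 1)
    (U : Matrix (Fin d) (Fin d) ℂ) (hU₁ : U * Uᴴ = 1) (hU₂ : Uᴴ * U = 1) :
    QGuesswork (fun x => U * ρ x * Uᴴ) p = QGuesswork ρ p := by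
  unfold QGuesswork
  rw [iInf, iInf]
  congr 1
  ext r
  simp only [Set.mem_range, Subtype.exists]
  constructor
  · rintro ⟨E, hE, rfl⟩
    exact ⟨fun σ => Uᴴ * E σ * U, isPOVM_conj U hU₂ E hE, (Ghat_conj ρ p U E).symm⟩
  · rintro ⟨F, hF, rfl⟩
    refine ⟨fun σ => U * F σ * Uᴴ, ?_, ?_⟩
    · simpa using isPOVM_conj Uᴴ (by simpa using hU₁) F hF
    · rw [Ghat_conj]
      congr 1
      funext σ
      have : Uᴴ * (U * F σ * Uᴴ) * U = (Uᴴ * U) * F σ * (Uᴴ * U) := by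
        simp only [mul_assoc]
      rw [this, hU₂, one_mul, mul_one]

end
end
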